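/- arXiv:0903.1699 — 2 statements merged into one kernel-verified Lean document; each statement's English description precedes it below -/
import Mathlib

section
/- Calderón–Zygmund cube decomposition lemma: Let r > 0 and A ⊂ B ⊂ Q_r be measurable subsets of the cube Q_r ⊂ ℝⁿ. Let δ ∈ (0,1) be such that (i) |A| ≤ δ|Q_r|, and (ii) for every dyadic subcube Q of Q_r with |A ∩ Q| > δ|Q|, the predecessor Q̃ of Q is contained in B. Then |A| ≤ δ|B|. -/
open MeasureTheory

/-- The half-open cube with lower-left corner `c` and side `r`. -/
def ccube {n : ℕ} (r : ℝ) (c : Fin n → ℝ) : Set (EuclideanSpace ℝ (Fin n)) :=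
  {y | ∀ i, c i ≤ y i ∧ y i < c i + r}

/-- The dyadic subcube of generation `k` with index `m` of the cube `ccube r c`. -/
def dyadicSub {n : ℕ} (r : ℝ) (c : Fin n → ℝ) (k : ℕ) (m : Fin n → ℕ) :
    Set (EuclideanSpace ℝ (Fin n)) :=
  ccube (r / 2 ^ k) (fun i => c i + (m i : ℝ) * (r / 2 ^ k))

/-! Call a dyadic cube `Q` heavy when `|A ∩ Q| > δ|Q|`. `Q_r` itself is not heavy, so walking up
from a heavy cube one reaches a heavy cube whose parent `Q̃` is not heavy; by (ii) `Q̃ ⊆ B`. The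
union `W` of these parents is the disjoint union of its maximal members, each of density at most
`δ`, so `|A ∩ W| ≤ δ|W| ≤ δ|B|`. The part of `A` outside all heavy cubes has density at most
`δ < 1` in every dyadic cube; covering an open neighbourhood of it by small dyadic cubes and using
outer regularity shows it is null. Since every heavy cube lies in `W`, `|A \ W| = 0`. -/

open Topology
open scoped ENNReal

namespace CalderonZygmund

variable {n : ℕ}

abbrev Index (n : ℕ) := ℕ × (Fin n → ℕ)

def cube (r : ℝ) (c : Fin n → ℝ) (p : Index n) : Set (EuclideanSpace ℝ (Fin n)) :=
  dyadicSub r c p.1 p.2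

def IsValid (p : Index n) : Prop := ∀ i, p.2 i < 2 ^ p.1

def parent (p : Index n) : Index n := (p.1 - 1, fun i => p.2 i / 2)

def IsDescendant (p q : Index n) : Prop := q.1 ≤ p.1 ∧ ∀ i, p.2 i / 2 ^ (p.1 - q.1) = q.2 i

noncomputable def indexAt (r : ℝ) (c : Fin n → ℝ) (k : ℕ) (x : EuclideanSpace ℝ (Fin n)) :
    Fin n → ℕ :=
  fun i => ⌊(x i - c i) / (r / 2 ^ k)⌋₊

namespace IsDescendant

lemma refl (p : Index n) : IsDescendant p p := ⟨le_rfl, fun i => by simp⟩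

lemma trans {p q t : Index n} (hpq : IsDescendant p q) (hqt : IsDescendant q t) :
    IsDescendant p t := by
  refine ⟨hqt.1.trans hpq.1, fun i => ?_⟩
  have hk : p.1 - t.1 = (p.1 - q.1) + (q.1 - t.1) := by have := hpq.1; have := hqt.1; omega
  rw [hk, pow_add, ← Nat.div_div_eq_div_mul, hpq.2 i, hqt.2 i]

lemma eq_of_fst_le {p q : Index n} (h : IsDescendant p q) (hk : p.1 ≤ q.1) : p = q := by
  have hk' : p.1 = q.1 := le_antisymm hk h.1
  refine Prod.ext hk' (funext fun i => ?_)
  simpa [hk'] using h.2 i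

end IsDescendant

lemma isDescendant_parent (p : Index n) (hp : 1 ≤ p.1) : IsDescendant p (parent p) :=
  ⟨Nat.sub_le _ _, fun i => by simp [parent, Nat.sub_sub_self hp]⟩

lemma IsValid.parent {p : Index n} (hp : IsValid p) : IsValid (parent p) := fun i => by
  have hpow : 2 ^ p.1 ≤ 2 ^ (p.1 - 1) * 2 := by
    rw [← pow_succ]; exact Nat.pow_le_pow_right two_pos (by omega)
  exact (Nat.div_lt_iff_lt_mul two_pos).2 ((hp i).trans_le hpow)

lemma nat_mul_le_and_lt_iff_floor_div {s t : ℝ} (hs : 0 < s) (m : ℕ) :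
    (m * s ≤ t ∧ t < m * s + s) ↔ 0 ≤ t ∧ ⌊t / s⌋₊ = m := by
  constructor
  · rintro ⟨h1, h2⟩
    have ht : 0 ≤ t := le_trans (by positivity) h1
    refine ⟨ht, (Nat.floor_eq_iff (div_nonneg ht hs.le)).2 ⟨?_, ?_⟩⟩
    · rwa [le_div_iff₀ hs]
    · rwa [div_lt_iff₀ hs, add_mul, one_mul]
  · rintro ⟨ht, hm⟩
    obtain ⟨h1, h2⟩ := (Nat.floor_eq_iff (div_nonneg ht hs.le)).1 hm
    rw [le_div_iff₀ hs] at h1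
    rw [div_lt_iff₀ hs, add_mul, one_mul] at h2
    exact ⟨h1, h2⟩

variable {r : ℝ} {c : Fin n → ℝ}

/- Cube membership is read off floors of the coordinates, which turns nesting of dyadic cubes into
`Nat` division by powers of two (`indexAt_div_two_pow`). -/
lemma mem_cube_iff (hr : 0 < r) {p : Index n} {x : EuclideanSpace ℝ (Fin n)} :
    x ∈ cube r c p ↔ ∀ i, c i ≤ x i ∧ indexAt r c p.1 x i = p.2 i := by
  simp only [cube, dyadicSub, ccube, Set.mem_ofPred_eq, indexAt]
  refine forall_congr' fun i => ?_
  have h := nat_mul_le_and_lt_iff_floor_div (t := x i - c i)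
    (by positivity : 0 < r / 2 ^ p.1) (p.2 i)
  rw [sub_nonneg] at h
  rw [← h]
  constructor <;> rintro ⟨h1, h2⟩ <;> constructor <;> linarith

lemma indexAt_div_two_pow {j k : ℕ} (hjk : j ≤ k) (x : EuclideanSpace ℝ (Fin n)) (i : Fin n) :
    indexAt r c k x i / 2 ^ (k - j) = indexAt r c j x i := by
  have hk : (2 : ℝ) ^ k = 2 ^ j * 2 ^ (k - j) := by rw [← pow_add, Nat.add_sub_cancel' hjk]
  simp only [indexAt]
  rw [← Nat.floor_div_natCast, Nat.cast_pow, Nat.cast_ofNat, hk]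
  congr 1
  field_simp

lemma cube_subset_cube (hr : 0 < r) {p q : Index n} (h : IsDescendant p q) :
    cube r c p ⊆ cube r c q := by
  intro x hx
  rw [mem_cube_iff hr] at hx ⊢
  exact fun i => ⟨(hx i).1, by rw [← indexAt_div_two_pow h.1, (hx i).2, h.2 i]⟩

lemma isDescendant_of_mem_cube (hr : 0 < r) {p q : Index n} (hk : q.1 ≤ p.1)
    {x : EuclideanSpace ℝ (Fin n)} (hp : x ∈ cube r c p) (hq : x ∈ cube r c q) :
    IsDescendant p q := by
  rw [mem_cube_iff hr] at hp hq
  exact ⟨hk, fun i => by rw [← (hp i).2, indexAt_div_two_pow hk, (hq i).2]⟩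

lemma cube_eq_ccube {p : Index n} (hp : IsValid p) (h0 : p.1 = 0) : cube r c p = ccube r c := by
  obtain ⟨k, m⟩ := p
  obtain rfl : k = 0 := h0
  obtain rfl : m = 0 := funext fun i => Nat.lt_one_iff.1 (hp i)
  ext y
  simp [cube, dyadicSub, ccube]

lemma measurableSet_ccube (r : ℝ) (c : Fin n → ℝ) : MeasurableSet (ccube r c) := by
  simp only [ccube, Set.ofPred_forall]
  exact MeasurableSet.iInter fun i => by measurability

lemma measurableSet_cube (r : ℝ) (c : Fin n → ℝ) (p : Index n) : MeasurableSet (cube r c p) :=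
  measurableSet_ccube _ _

lemma exists_forall_abs_sub_lt_imp_mem {ι : Type*} [Fintype ι] {x : EuclideanSpace ℝ ι}
    {U : Set (EuclideanSpace ℝ ι)} (hU : U ∈ 𝓝 x) :
    ∃ ε > 0, ∀ y : EuclideanSpace ℝ ι, (∀ i, |y i - x i| < ε) → y ∈ U := by
  have hU' : WithLp.toLp 2 ⁻¹' U ∈ 𝓝 (WithLp.ofLp x) :=
    (PiLp.continuous_toLp 2 _).continuousAt.preimage_mem_nhds (by simpa using hU)
  obtain ⟨ε, hε, hball⟩ := Metric.mem_nhds_iff.1 hU'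
  refine ⟨ε, hε, fun y hy => hball ((dist_pi_lt_iff hε).2 fun i => ?_)⟩
  simpa [Real.dist_eq] using hy i

lemma isValid_indexAt (hr : 0 < r) {x : EuclideanSpace ℝ (Fin n)} (hx : x ∈ ccube r c) (k : ℕ) :
    IsValid (k, indexAt r c k x) := fun i => by
  have hs : 0 < r / 2 ^ k := by positivity
  refine (Nat.floor_lt (div_nonneg (sub_nonneg.2 (hx i).1) hs.le)).2 ?_
  rw [div_lt_iff₀ hs, Nat.cast_pow, Nat.cast_ofNat, mul_div_cancel₀ _ (by positivity)]
  linarith [(hx i).2]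

lemma exists_cube_subset_of_mem_nhds (hr : 0 < r) {x : EuclideanSpace ℝ (Fin n)}
    (hx : x ∈ ccube r c) {U : Set (EuclideanSpace ℝ (Fin n))} (hU : U ∈ 𝓝 x) :
    ∃ p, IsValid p ∧ x ∈ cube r c p ∧ cube r c p ⊆ U := by
  obtain ⟨ε, hε, hεU⟩ := exists_forall_abs_sub_lt_imp_mem hU
  obtain ⟨k, hk⟩ := exists_pow_lt_of_lt_one (div_pos hε hr) one_half_lt_one
  have hxk : x ∈ cube r c (k, indexAt r c k x) := (mem_cube_iff hr).2 fun i => ⟨(hx i).1, rfl⟩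
  refine ⟨_, isValid_indexAt hr hx k, hxk, fun y hy => hεU y fun i => ?_⟩
  have hside : r / 2 ^ k < ε := by
    rw [one_div_pow] at hk
    calc r / 2 ^ k = r * (1 / 2 ^ k) := by ring
      _ < r * (ε / r) := by gcongr
      _ = ε := mul_div_cancel₀ _ hr.ne'
  obtain ⟨hy1, hy2⟩ := hy i
  obtain ⟨hx1, hx2⟩ := hxk i
  rw [abs_sub_lt_iff]
  constructor <;> linarith

lemma exists_maximal_ancestor (S : Set (Index n)) {p : Index n} (hp : p ∈ S) :
    ∃ q ∈ S, IsDescendant p q ∧ ∀ q' ∈ S, IsDescendant q q' → q' = q := by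
  obtain ⟨q, ⟨hqS, hpq⟩, hmin⟩ := (InvImage.wf Prod.fst wellFounded_lt).has_min
    {q | q ∈ S ∧ IsDescendant p q} ⟨p, hp, .refl p⟩
  exact ⟨q, hqS, hpq, fun q' hq'S hqq' =>
    (hqq'.eq_of_fst_le (not_lt.1 (hmin q' ⟨hq'S, hpq.trans hqq'⟩))).symm⟩

lemma exists_pairwiseDisjoint_biUnion_cube_eq (hr : 0 < r) (S : Set (Index n)) :
    ∃ M ⊆ S, M.PairwiseDisjoint (cube r c) ∧ ⋃ p ∈ M, cube r c p = ⋃ p ∈ S, cube r c p := by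
  set M := {p ∈ S | ∀ q ∈ S, IsDescendant p q → q = p}
  have hMS : M ⊆ S := fun p hp => hp.1
  refine ⟨M, hMS, fun p hp q hq hne => Set.disjoint_left.2 fun x hxp hxq => hne ?_, ?_⟩
  · rcases le_total q.1 p.1 with hk | hk
    · exact (hp.2 q hq.1 (isDescendant_of_mem_cube hr hk hxp hxq)).symm
    · exact hq.2 p hp.1 (isDescendant_of_mem_cube hr hk hxq hxp)
  refine (Set.biUnion_mono hMS fun _ _ => subset_rfl).antisymm (Set.iUnion₂_subset fun p hp => ?_)
  obtain ⟨q, hqS, hpq, hq⟩ := exists_maximal_ancestor S hp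
  exact (cube_subset_cube hr hpq).trans (Set.subset_biUnion_of_mem (u := cube r c) ⟨hqS, hq⟩)

lemma measure_inter_biUnion_cube_le (μ : Measure (EuclideanSpace ℝ (Fin n))) (hr : 0 < r)
    (A : Set (EuclideanSpace ℝ (Fin n))) {δ : ℝ≥0∞} (S : Set (Index n))
    (hS : ∀ p ∈ S, μ (A ∩ cube r c p) ≤ δ * μ (cube r c p)) :
    μ (A ∩ ⋃ p ∈ S, cube r c p) ≤ δ * μ (⋃ p ∈ S, cube r c p) := by
  obtain ⟨M, hMS, hdisj, hM⟩ := exists_pairwiseDisjoint_biUnion_cube_eq (c := c) hr S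
  rw [← hM, Set.inter_iUnion₂, measure_biUnion M.to_countable hdisj fun p _ =>
    measurableSet_cube r c p, ← ENNReal.tsum_mul_left]
  exact (measure_biUnion_le μ M.to_countable _).trans
    (ENNReal.tsum_le_tsum fun p => hS p (hMS p.2))

lemma measure_eq_zero_of_forall_cube_le (μ : Measure (EuclideanSpace ℝ (Fin n)))
    [μ.OuterRegular]
    (hr : 0 < r) {A : Set (EuclideanSpace ℝ (Fin n))} (hAQ : A ⊆ ccube r c) (hA : μ A ≠ ∞)
    {δ : ℝ≥0∞} (hδ : δ < 1) (h : ∀ p, IsValid p → μ (A ∩ cube r c p) ≤ δ * μ (cube r c p)) :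
    μ A = 0 := by
  have hopen : ∀ U, A ⊆ U → IsOpen U → μ A ≤ δ * μ U := by
    intro U hAU hU
    set S := {p | IsValid p ∧ cube r c p ⊆ U}
    have hAS : A ⊆ ⋃ p ∈ S, cube r c p := fun x hx => by
      obtain ⟨p, hp, hxp, hpU⟩ :=
        exists_cube_subset_of_mem_nhds hr (hAQ hx) (hU.mem_nhds (hAU hx))
      exact Set.mem_biUnion (show p ∈ S from ⟨hp, hpU⟩) hxp
    calc μ A = μ (A ∩ ⋃ p ∈ S, cube r c p) := by rw [Set.inter_eq_left.2 hAS]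
      _ ≤ δ * μ (⋃ p ∈ S, cube r c p) :=
        measure_inter_biUnion_cube_le μ hr A S fun p hp => h p hp.1
      _ ≤ δ * μ U := by gcongr; exact Set.iUnion₂_subset fun p hp => hp.2
  have hle : μ A ≤ δ * μ A := by
    refine ENNReal.le_of_forall_pos_le_add fun ε hε _ => ?_
    obtain ⟨U, hAU, hU, hUA⟩ := A.exists_isOpen_lt_add hA (ENNReal.coe_pos.2 hε).ne'
    calc μ A ≤ δ * μ U := hopen U hAU hU
      _ ≤ δ * (μ A + ε) := by gcongr
      _ ≤ δ * μ A + ε := by rw [mul_add]; gcongr; exact mul_le_of_le_one_left' hδ.le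
  by_contra h0
  exact hδ.not_ge ((ENNReal.mul_le_mul_iff_left h0 hA).1 ((one_mul _).trans_le hle))

def heavy (μ : Measure (EuclideanSpace ℝ (Fin n))) (r : ℝ) (c : Fin n → ℝ)
    (A : Set (EuclideanSpace ℝ (Fin n))) (δ : ℝ≥0∞) : Set (Index n) :=
  {p | IsValid p ∧ δ * μ (cube r c p) < μ (A ∩ cube r c p)}

lemma measure_diff_biUnion_heavy_eq_zero (μ : Measure (EuclideanSpace ℝ (Fin n)))
    [μ.OuterRegular]
    (hr : 0 < r) {A : Set (EuclideanSpace ℝ (Fin n))} (hAQ : A ⊆ ccube r c) (hA : μ A ≠ ∞)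
    {δ : ℝ≥0∞} (hδ : δ < 1) :
    μ (A \ ⋃ p ∈ heavy μ r c A δ, cube r c p) = 0 := by
  refine measure_eq_zero_of_forall_cube_le μ hr (Set.sdiff_subset.trans hAQ)
    (measure_ne_top_of_subset Set.sdiff_subset hA) hδ fun p hp => ?_
  by_cases hheavy : p ∈ heavy μ r c A δ
  · rw [(Set.disjoint_sdiff_left.mono_right
      (Set.subset_biUnion_of_mem (u := cube r c) hheavy)).inter_eq, measure_empty]
    exact zero_le
  · exact (measure_mono (Set.inter_subset_inter_left _ Set.sdiff_subset)).trans
      (not_lt.1 fun h => hheavy ⟨hp, h⟩)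

lemma exists_isDescendant_parent_notMem {H : Set (Index n)} (hroot : ∀ p ∈ H, p.1 ≠ 0)
    {q : Index n} (hq : q ∈ H) : ∃ q' ∈ H, parent q' ∉ H ∧ IsDescendant q (parent q') := by
  suffices ∀ k, ∀ q ∈ H, q.1 = k → ∃ q' ∈ H, parent q' ∉ H ∧ IsDescendant q (parent q') from
    this _ q hq rfl
  intro k
  induction k with
  | zero => exact fun q hq h0 => absurd h0 (hroot q hq)
  | succ k ih =>
    intro q hq hk
    have hdesc := isDescendant_parent q (by omega)
    by_cases hpar : parent q ∈ H
    · obtain ⟨q', hq', hpar', hdesc'⟩ := ih (parent q) hpar (by simp [parent, hk])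
      exact ⟨q', hq', hpar', hdesc.trans hdesc'⟩
    · exact ⟨q, hq, hpar, hdesc⟩

lemma measure_ccube_lt_top (μ : Measure (EuclideanSpace ℝ (Fin n)))
    [IsFiniteMeasureOnCompacts μ] (r : ℝ) (c : Fin n → ℝ) : μ (ccube r c) < ∞ := by
  have hK := (isCompact_Icc (a := c) (b := c + fun _ => r)).image (PiLp.continuous_toLp 2 _)
  refine (measure_mono fun y hy => ?_).trans_lt hK.measure_lt_top
  exact ⟨WithLp.ofLp y, ⟨fun i => (hy i).1, fun i => (hy i).2.le⟩, rfl⟩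

end CalderonZygmund

open CalderonZygmund

theorem calderon_zygmund_decomposition_general {n : ℕ} (r : ℝ) (hr : 0 < r) (c : Fin n → ℝ)
    (A B : Set (EuclideanSpace ℝ (Fin n)))
    (hAB : A ⊆ B) (hBQ : B ⊆ ccube r c) (δ : ℝ) (hδ : δ ∈ Set.Ioo (0:ℝ) 1)
    (hAsmall : volume A ≤ ENNReal.ofReal δ * volume (ccube r c))
    (hpred : ∀ k : ℕ, 1 ≤ k → ∀ m : Fin n → ℕ, (∀ i, m i < 2 ^ k) →
      ENNReal.ofReal δ * volume (dyadicSub r c k m) < volume (A ∩ dyadicSub r c k m) →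
      dyadicSub r c (k - 1) (fun i => m i / 2) ⊆ B) :
    volume A ≤ ENNReal.ofReal δ * volume B := by
  set δ' := ENNReal.ofReal δ
  set H := heavy volume r c A δ'
  have hAQ : A ⊆ ccube r c := hAB.trans hBQ
  have hroot : ∀ p ∈ H, p.1 ≠ 0 := fun p hp h0 => by
    have hQ := hp.2.trans_le (measure_mono Set.inter_subset_left)
    rw [cube_eq_ccube hp.1 h0] at hQ
    exact hQ.not_ge hAsmall
  set T := parent '' {q ∈ H | parent q ∉ H}
  have hTB : ⋃ p ∈ T, cube r c p ⊆ B := Set.iUnion₂_subset <| by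
    rintro _ ⟨q, ⟨hq, -⟩, rfl⟩
    exact hpred q.1 (Nat.one_le_iff_ne_zero.2 (hroot q hq)) q.2 hq.1 hq.2
  have hT : ∀ p ∈ T, volume (A ∩ cube r c p) ≤ δ' * volume (cube r c p) := by
    rintro _ ⟨q, ⟨hq, hpar⟩, rfl⟩
    exact not_lt.1 fun h => hpar ⟨hq.1.parent, h⟩
  have hHT : ⋃ p ∈ H, cube r c p ⊆ ⋃ p ∈ T, cube r c p := Set.iUnion₂_subset fun q hq => by
    obtain ⟨q', hq', hpar, hdesc⟩ := exists_isDescendant_parent_notMem hroot hq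
    exact (cube_subset_cube hr hdesc).trans (Set.subset_biUnion_of_mem ⟨q', ⟨hq', hpar⟩, rfl⟩)
  have hnull : volume (A \ ⋃ p ∈ T, cube r c p) = 0 :=
    measure_mono_null (Set.sdiff_subset_sdiff_right hHT) (measure_diff_biUnion_heavy_eq_zero
      volume hr hAQ (measure_ne_top_of_subset hAQ (measure_ccube_lt_top volume r c).ne)
      (ENNReal.ofReal_lt_one.2 hδ.2))
  calc volume A ≤ volume (A ∩ ⋃ p ∈ T, cube r c p) + volume (A \ ⋃ p ∈ T, cube r c p) :=
        measure_le_inter_add_sdiff _ _ _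
    _ = volume (A ∩ ⋃ p ∈ T, cube r c p) := by rw [hnull, add_zero]
    _ ≤ δ' * volume (⋃ p ∈ T, cube r c p) := measure_inter_biUnion_cube_le volume hr A T hT
    _ ≤ δ' * volume B := by gcongr

theorem calderon_zygmund_decomposition {n : ℕ} (r : ℝ) (hr : 0 < r) (c : Fin n → ℝ)
    (A B : Set (EuclideanSpace ℝ (Fin n))) (hA : MeasurableSet A) (hB : MeasurableSet B)
    (hAB : A ⊆ B) (hBQ : B ⊆ ccube r c) (δ : ℝ) (hδ : δ ∈ Set.Ioo (0:ℝ) 1)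
    (hAsmall : volume A ≤ ENNReal.ofReal δ * volume (ccube r c))
    (hpred : ∀ k : ℕ, 1 ≤ k → ∀ m : Fin n → ℕ, (∀ i, m i < 2 ^ k) →
      ENNReal.ofReal δ * volume (dyadicSub r c k m) < volume (A ∩ dyadicSub r c k m) →
      dyadicSub r c (k - 1) (fun i => m i / 2) ⊆ B) :
    volume A ≤ ENNReal.ofReal δ * volume B :=
  calderon_zygmund_decomposition_general r hr c A B hAB hBQ δ hδ hAsmall hpred
end

section
/- Key integral computation in the ABP estimate: let n ≥ 2, μ > 0, M_F ≥ 0 and M > 0 with M ≥ M_F, and let g(p) = (|p|^{n/(n−1)} + μ^{n/(n−1)})^{1−n} on ℝⁿ. Then g(p) ≥ 2^{2−n}(|p|ⁿ + μⁿ)^{−1} for all p, and ∫_{B_M \ B_{M_F}} g(p) dp ≥ (2^{2−n}/n)·ω_n·ln((Mⁿ + μⁿ)/(M_Fⁿ + μⁿ)), where ω_n is the volume of the unit ball in ℝⁿ. -/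
/-!
Convexity of `t ↦ t ^ (n - 1)` gives
`(a + b) ^ (n - 1) ≤ 2 ^ (n - 2) (a ^ (n - 1) + b ^ (n - 1))`; with `a = |p| ^ (n / (n - 1))` and
`b = μ ^ (n / (n - 1))` this is the pointwise bound `g p ≥ 2 ^ (2 - n) / (|p| ^ n + μ ^ n)`.
In polar coordinates the integral of the right-hand side over the annulus is
`n ω_n ∫ r ^ (n - 1) / (r ^ n + μ ^ n) dr = ω_n log ((M ^ n + μ ^ n) / (M_F ^ n + μ ^ n))`,
which exceeds the claimed bound by the factor `n`.
-/

open MeasureTheory Set Metric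

/-- The radial profile of `g`: `g p = abpWeight n μ ‖p‖`. -/
noncomputable def abpWeight (s μ x : ℝ) : ℝ :=
  (x ^ (s / (s - 1)) + μ ^ (s / (s - 1))) ^ (1 - s)

lemma Real.rpow_add_le_mul_rpow_add_rpow {a b p : ℝ} (ha : 0 ≤ a) (hb : 0 ≤ b)
    (hp : 1 ≤ p) : (a + b) ^ p ≤ 2 ^ (p - 1) * (a ^ p + b ^ p) := by
  lift a to NNReal using ha
  lift b to NNReal using hb
  exact_mod_cast NNReal.rpow_add_le_mul_rpow_add_rpow a b hp

lemma two_rpow_mul_inv_rpow_add_rpow_le_abpWeight {s μ x : ℝ} (hs : 2 ≤ s) (hμ : 0 < μ)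
    (hx : 0 ≤ x) : 2 ^ (2 - s) * (x ^ s + μ ^ s)⁻¹ ≤ abpWeight s μ x := by
  set q := s / (s - 1)
  have hq : q * (s - 1) = s := div_mul_cancel₀ _ (by linarith)
  have hsum : 0 < x ^ q + μ ^ q := by positivity
  have key : (x ^ q + μ ^ q) ^ (s - 1) ≤ 2 ^ (s - 2) * (x ^ s + μ ^ s) := by
    have h := Real.rpow_add_le_mul_rpow_add_rpow (Real.rpow_nonneg hx q)
      (Real.rpow_nonneg hμ.le q) (by linarith : 1 ≤ s - 1)
    rwa [← Real.rpow_mul hx, ← Real.rpow_mul hμ.le, hq, sub_sub, one_add_one_eq_two] at h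
  calc 2 ^ (2 - s) * (x ^ s + μ ^ s)⁻¹ = (2 ^ (s - 2) * (x ^ s + μ ^ s))⁻¹ := by
        rw [mul_inv, ← Real.rpow_neg zero_le_two, neg_sub]
    _ ≤ ((x ^ q + μ ^ q) ^ (s - 1))⁻¹ := inv_anti₀ (by positivity) key
    _ = abpWeight s μ x := by rw [← Real.rpow_neg hsum.le, neg_sub]; rfl

lemma continuousOn_abpWeight {s μ : ℝ} (hs : 1 < s) (hμ : 0 < μ) :
    ContinuousOn (abpWeight s μ) (Ici 0) := by
  have hq : 0 ≤ s / (s - 1) := div_nonneg (by linarith) (by linarith)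
  refine ContinuousOn.rpow_const ?_ fun x (hx : 0 ≤ x) => Or.inl (by positivity)
  exact ((continuous_id.rpow_const fun _ => Or.inr hq).add continuous_const).continuousOn

lemma pow_add_pow_pos_of_mem_uIcc (n : ℕ) {μ a b r : ℝ} (hμ : 0 < μ) (ha : 0 ≤ a)
    (hb : 0 ≤ b) (hr : r ∈ uIcc a b) : 0 < r ^ n + μ ^ n := by
  have : 0 ≤ r := (le_min ha hb).trans hr.1
  positivity

lemma intervalIntegrable_pow_mul_inv_pow_add_pow (m n : ℕ) {μ a b : ℝ} (hμ : 0 < μ)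
    (ha : 0 ≤ a) (hb : 0 ≤ b) :
    IntervalIntegrable (fun r => r ^ m * (r ^ n + μ ^ n)⁻¹) volume a b :=
  ContinuousOn.intervalIntegrable <| (continuous_pow _).continuousOn.mul <|
    ContinuousOn.inv₀ (by fun_prop) fun _ hr => (pow_add_pow_pos_of_mem_uIcc n hμ ha hb hr).ne'

lemma integral_pow_mul_inv_pow_add_pow {n : ℕ} (hn : n ≠ 0) {μ a b : ℝ} (hμ : 0 < μ)
    (ha : 0 ≤ a) (hb : 0 ≤ b) :
    ∫ r in a..b, r ^ (n - 1) * (r ^ n + μ ^ n)⁻¹ =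
      Real.log ((b ^ n + μ ^ n) / (a ^ n + μ ^ n)) / n := by
  have hpos (r : ℝ) (hr : r ∈ uIcc a b) := pow_add_pow_pos_of_mem_uIcc n hμ ha hb hr
  rw [Real.log_div (hpos b right_mem_uIcc).ne' (hpos a left_mem_uIcc).ne', sub_div]
  refine intervalIntegral.integral_eq_sub_of_hasDerivAt
    (f := fun r => Real.log (r ^ n + μ ^ n) / n) (fun r hr => ?_) ?_
  · refine ((((hasDerivAt_pow n r).add_const (μ ^ n)).log (hpos r hr).ne').div_const
      (n : ℝ)).congr_deriv ?_
    field_simp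
  · exact intervalIntegrable_pow_mul_inv_pow_add_pow _ n hμ ha hb

lemma two_rpow_mul_log_div_le_integral_pow_mul_abpWeight {n : ℕ} (hn : 2 ≤ n) {μ a b : ℝ}
    (hμ : 0 < μ) (ha : 0 ≤ a) (hab : a ≤ b) :
    2 ^ (2 - (n : ℝ)) * (Real.log ((b ^ n + μ ^ n) / (a ^ n + μ ^ n)) / n) ≤
      ∫ r in a..b, r ^ (n - 1) * abpWeight n μ r := by
  have hn' : (2 : ℝ) ≤ n := by exact_mod_cast hn
  have hb : 0 ≤ b := ha.trans hab
  have hweight : IntervalIntegrable (fun r => r ^ (n - 1) * abpWeight n μ r) volume a b := by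
    refine ContinuousOn.intervalIntegrable <| (continuous_pow _).continuousOn.mul <|
      (continuousOn_abpWeight (by linarith) hμ).mono ?_
    rw [uIcc_of_le hab]
    exact Icc_subset_Ici_self.trans (Ici_subset_Ici.2 ha)
  rw [← integral_pow_mul_inv_pow_add_pow (by omega) hμ ha hb,
    ← intervalIntegral.integral_const_mul]
  refine intervalIntegral.integral_mono_on hab
    ((intervalIntegrable_pow_mul_inv_pow_add_pow _ n hμ ha hb).const_mul _) hweight fun r hr => ?_
  have hr0 : 0 ≤ r := ha.trans hr.1
  have h := two_rpow_mul_inv_rpow_add_rpow_le_abpWeight hn' hμ hr0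
  simp only [Real.rpow_natCast] at h
  rw [mul_left_comm]
  exact mul_le_mul_of_nonneg_left h (by positivity)

lemma MeasureTheory.setIntegral_ball_diff_ball_fun_norm {E F : Type*} [NormedAddCommGroup E]
    [NormedSpace ℝ E] [FiniteDimensional ℝ E] [Nontrivial E] [MeasurableSpace E] [BorelSpace E]
    (μ : Measure E) [μ.IsAddHaarMeasure] [NormedAddCommGroup F] [NormedSpace ℝ F]
    (f : ℝ → F) {a b : ℝ} (ha : 0 ≤ a) (hab : a ≤ b) :
    ∫ x in ball 0 b \ ball 0 a, f ‖x‖ ∂μ =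
      Module.finrank ℝ E • μ.real (ball 0 1) •
        ∫ r in a..b, r ^ (Module.finrank ℝ E - 1) • f r := by
  have hset : ball (0 : E) b \ ball 0 a = norm ⁻¹' Ico a b := by
    ext x; simp [and_comm]
  have hind (x : E) :
      (norm ⁻¹' Ico a b).indicator (fun x => f ‖x‖) x = (Ico a b).indicator f ‖x‖ :=
    indicator_comp_right norm
  have hae : (Ioi 0 ∩ Ico a b : Set ℝ) =ᵐ[volume] Ioc a b := by
    refine ae_eq_set.2 ⟨measure_mono_null ?_ (measure_singleton a),
      measure_mono_null ?_ (measure_singleton b)⟩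
    · rintro r ⟨⟨-, har, hrb⟩, hr⟩
      exact le_antisymm (not_lt.1 fun h => hr ⟨h, hrb.le⟩) har
    · rintro r ⟨⟨har, hrb⟩, hr⟩
      exact le_antisymm hrb (not_lt.1 fun h => hr ⟨ha.trans_lt har, har.le, h⟩)
  rw [hset, ← integral_indicator (measurableSet_Ico.preimage continuous_norm.measurable)]
  simp only [hind]
  rw [integral_fun_norm_addHaar μ, intervalIntegral.integral_of_le hab]
  simp_rw [← indicator_smul_apply (Ico a b) (fun r : ℝ => r ^ (Module.finrank ℝ E - 1)) f]
  rw [setIntegral_indicator measurableSet_Ico, setIntegral_congr_set hae]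

theorem abp_integral_computation_general {n : ℕ} (hn : 2 ≤ n) (μ MF M : ℝ) (hμ : 0 < μ)
    (hMF : 0 ≤ MF) (hMFM : MF ≤ M) :
    let g : EuclideanSpace ℝ (Fin n) → ℝ := fun p =>
      (‖p‖ ^ ((n : ℝ) / ((n : ℝ) - 1)) + μ ^ ((n : ℝ) / ((n : ℝ) - 1))) ^ (1 - (n : ℝ))
    (∀ p : EuclideanSpace ℝ (Fin n),
      (2 : ℝ) ^ (2 - (n : ℝ)) * (‖p‖ ^ (n : ℝ) + μ ^ (n : ℝ))⁻¹ ≤ g p) ∧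
    ((2 : ℝ) ^ (2 - (n : ℝ)) / n) *
        (volume (Metric.ball (0 : EuclideanSpace ℝ (Fin n)) 1)).toReal *
        Real.log ((M ^ (n : ℝ) + μ ^ (n : ℝ)) / (MF ^ (n : ℝ) + μ ^ (n : ℝ)))
      ≤ ∫ p in Metric.ball (0 : EuclideanSpace ℝ (Fin n)) M \
          Metric.ball (0 : EuclideanSpace ℝ (Fin n)) MF, g p := by
  intro g
  have hn' : (2 : ℝ) ≤ n := by exact_mod_cast hn
  refine ⟨fun p => two_rpow_mul_inv_rpow_add_rpow_le_abpWeight hn' hμ (norm_nonneg p), ?_⟩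
  have : Nonempty (Fin n) := ⟨⟨0, by omega⟩⟩
  have hM : 0 ≤ M := hMF.trans hMFM
  simp only [Real.rpow_natCast]
  set ω := (volume (ball (0 : EuclideanSpace ℝ (Fin n)) 1)).toReal
  set L := Real.log ((M ^ n + μ ^ n) / (MF ^ n + μ ^ n))
  have hL : 0 ≤ L := Real.log_nonneg <| (one_le_div (by positivity)).2 (by gcongr)
  calc 2 ^ (2 - (n : ℝ)) / n * ω * L ≤ n * ω * (2 ^ (2 - (n : ℝ)) * (L / n)) := by
        rw [show n * ω * (2 ^ (2 - (n : ℝ)) * (L / n)) = 2 ^ (2 - (n : ℝ)) * ω * L by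
          field_simp]
        gcongr
        exact div_le_self (by positivity) (by linarith)
    _ ≤ n * ω * ∫ r in MF..M, r ^ (n - 1) * abpWeight n μ r := by
        gcongr
        exact two_rpow_mul_log_div_le_integral_pow_mul_abpWeight hn hμ hMF hMFM
    _ = ∫ p in ball 0 M \ ball 0 MF, g p := by
        refine Eq.trans ?_
          (setIntegral_ball_diff_ball_fun_norm volume (abpWeight n μ) hMF hMFM).symm
        simp [measureReal_def, ω, mul_assoc]

theorem abp_integral_computation {n : ℕ} (hn : 2 ≤ n) (μ MF M : ℝ) (hμ : 0 < μ)
    (hMF : 0 ≤ MF) (hM : 0 < M) (hMFM : MF ≤ M) :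
    let g : EuclideanSpace ℝ (Fin n) → ℝ := fun p =>
      (‖p‖ ^ ((n : ℝ) / ((n : ℝ) - 1)) + μ ^ ((n : ℝ) / ((n : ℝ) - 1))) ^ (1 - (n : ℝ))
    (∀ p : EuclideanSpace ℝ (Fin n),
      (2 : ℝ) ^ (2 - (n : ℝ)) * (‖p‖ ^ (n : ℝ) + μ ^ (n : ℝ))⁻¹ ≤ g p) ∧
    ((2 : ℝ) ^ (2 - (n : ℝ)) / n) *
        (volume (Metric.ball (0 : EuclideanSpace ℝ (Fin n)) 1)).toReal *
        Real.log ((M ^ (n : ℝ) + μ ^ (n : ℝ)) / (MF ^ (n : ℝ) + μ ^ (n : ℝ)))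
      ≤ ∫ p in Metric.ball (0 : EuclideanSpace ℝ (Fin n)) M \
          Metric.ball (0 : EuclideanSpace ℝ (Fin n)) MF, g p :=
  abp_integral_computation_general hn μ MF M hμ hMF hMFM
end
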